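/- arXiv:2205.06507 — 2 statements merged into one kernel-verified Lean document; each statement's English description precedes it below -/
import Mathlib

section
/- Let P₀, …, Pₙ be probability measures and μ₀,…,μₙ their kernel embeddings in a Hilbert space H. Suppose w : ℝ → ℝ is integrable with ∫ w = 0 and antiderivative W compactly supported in an interval of length smaller than min gaps of t₁ < … < tₙ. Then for the abrupt drift process p_t with these concepts and change points, ‖∫ p_s w(t−s) ds‖_H = Σⱼ₌₁ⁿ ‖μⱼ − μⱼ₋₁‖_H · |W(t − tⱼ)| for all t. -/
/-!
The concept process is a step function, `μ_{p_s} = μ₀ + ∑_{t_j ≤ s} (μ_j - μ_{j-1})`.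
Convolving it against `w (τ - ·)` sends the constant `μ₀` to `(∫ w) • μ₀ = 0` and the jump at
`t_j` to `W (τ - t_j) • (μ_j - μ_{j-1})`. As `W` lives on an interval shorter than every gap
between change points, at most one of these terms is nonzero, so the norm of their sum is the
sum of their norms.
-/

open MeasureTheory

/-- Index of the active concept at time `s` of a drift process with abrupt drift only,
with change points `t 0 < … < t (n-1)`: the number of change points `≤ s`. -/
noncomputable def conceptIndex (n : ℕ) (t : Fin n → ℝ) (s : ℝ) : Fin (n + 1) :=
  ⟨(Finset.univ.filter (fun i => t i ≤ s)).card,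
    Nat.lt_succ_of_le (le_trans (Finset.card_filter_le _ _) (by simp))⟩

theorem Fin.sum_filter_castSucc_lt_sub {G : Type*} [AddCommGroup G] {n : ℕ}
    (f : Fin (n + 1) → G) (k : Fin (n + 1)) :
    ∑ j : Fin n with j.castSucc < k, (f j.succ - f j.castSucc) = f k - f 0 := by
  induction k using Fin.induction with
  | zero => simp
  | succ i ih =>
    have hfilter : ({j | j.castSucc < i.succ} : Finset (Fin n))
        = insert i ({j | j.castSucc < i.castSucc} : Finset (Fin n)) := by
      ext j
      simp [Fin.castSucc_lt_succ_iff, le_iff_lt_or_eq, or_comm]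
    rw [hfilter, Finset.sum_insert (by simp), ih]
    abel

theorem castSucc_lt_conceptIndex_iff {n : ℕ} {t : Fin n → ℝ} (ht : Monotone t) (s : ℝ)
    (j : Fin n) : j.castSucc < conceptIndex n t s ↔ t j ≤ s := by
  rw [Fin.lt_def, Fin.val_castSucc, conceptIndex]
  constructor
  · intro hj
    by_contra! hs
    have hsub : ({i | t i ≤ s} : Finset (Fin n)) ⊆ Finset.Iio j := fun i hi => by
      simp only [Finset.mem_filter, Finset.mem_univ, true_and] at hi
      exact Finset.mem_Iio.mpr (ht.reflect_lt (hi.trans_lt hs))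
    have hcard := Finset.card_le_card hsub
    rw [Fin.card_Iio] at hcard
    exact hj.not_ge hcard
  · intro hj
    have hsub : Finset.Iic j ⊆ ({i | t i ≤ s} : Finset (Fin n)) := fun i hi => by
      simp only [Finset.mem_filter, Finset.mem_univ, true_and]
      exact (ht (Finset.mem_Iic.mp hi)).trans hj
    simpa [Fin.card_Iic] using Finset.card_le_card hsub

theorem apply_conceptIndex_eq_add_sum {G : Type*} [AddCommGroup G] {n : ℕ} {t : Fin n → ℝ}
    (ht : Monotone t) (μ : Fin (n + 1) → G) (s : ℝ) :
    μ (conceptIndex n t s) = μ 0 + ∑ j with t j ≤ s, (μ j.succ - μ j.castSucc) := by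
  simp_rw [← castSucc_lt_conceptIndex_iff ht s, Fin.sum_filter_castSucc_lt_sub]
  abel

theorem integral_Ici_comp_sub_left {E : Type*} [NormedAddCommGroup E] [NormedSpace ℝ E]
    (f : ℝ → E) (τ c : ℝ) : ∫ s in Set.Ici c, f (τ - s) = ∫ x in Set.Iic (τ - c), f x := by
  rw [← Set.image_const_sub_Ici,
    (Measure.measurePreserving_sub_left volume τ).setIntegral_image_emb
      (Homeomorph.subLeft τ).measurableEmbedding]

theorem integral_comp_sub_smul_step {ι E : Type*} [Fintype ι] [NormedAddCommGroup E]
    [NormedSpace ℝ E] [CompleteSpace E] {w : ℝ → ℝ} (hw : Integrable w) (τ : ℝ) (v₀ : E)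
    (c : ι → ℝ) (v : ι → E) :
    ∫ s, w (τ - s) • (v₀ + ∑ j with c j ≤ s, v j)
      = (∫ x, w x) • v₀ + ∑ j, (∫ x in Set.Iic (τ - c j), w x) • v j := by
  have hwτ : Integrable (fun s => w (τ - s)) := (integrable_comp_sub_left w τ).mpr hw
  have hstep (j : ι) :
      Integrable fun s => (Set.Ici (c j)).indicator (fun s => w (τ - s)) s • v j :=
    (hwτ.indicator measurableSet_Ici).smul_const _
  have hsplit (s : ℝ) : w (τ - s) • (v₀ + ∑ j with c j ≤ s, v j)
      = w (τ - s) • v₀ + ∑ j, (Set.Ici (c j)).indicator (fun s => w (τ - s)) s • v j := by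
    simp only [smul_add, Finset.smul_sum, Finset.sum_filter, Set.indicator_apply, Set.mem_Ici,
      smul_ite, smul_zero, ite_smul, zero_smul]
  simp_rw [hsplit]
  rw [integral_add (hwτ.smul_const _) (integrable_finsetSum _ fun j _ => hstep j),
    integral_smul_const, integral_sub_left_eq_self w volume τ,
    integral_finsetSum _ fun j _ => hstep j]
  simp only [integral_smul_const, integral_indicator measurableSet_Ici, integral_Ici_comp_sub_left]

theorem norm_sum_eq_sum_norm_of_subsingleton_support {ι E : Type*} [Fintype ι]
    [SeminormedAddCommGroup E] {f : ι → E} (hf : (Function.support f).Subsingleton) :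
    ‖∑ i, f i‖ = ∑ i, ‖f i‖ := by
  obtain hzero | ⟨i, hi⟩ := hf.eq_empty_or_singleton
  · simp [Function.support_eq_empty_iff.mp hzero]
  · have hsingle (j : ι) (hj : j ≠ i) : f j = 0 := by
      simpa [hj] using (Set.ext_iff.mp hi j).not.mpr
    rw [Fintype.sum_eq_single i hsingle, Fintype.sum_eq_single i fun j hj => by simp [hsingle j hj]]

theorem subsingleton_support_comp_sub_of_lt_sub {ι M : Type*} [LinearOrder ι] [Zero M]
    {W : ℝ → M} {a l : ℝ} (hW : Function.support W ⊆ Set.Icc a (a + l)) {t : ι → ℝ}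
    (hgap : ∀ i j, i < j → l < t j - t i) (τ : ℝ) :
    (Function.support fun j => W (τ - t j)).Subsingleton := by
  intro i hi j hj
  have hi' := hW hi
  have hj' := hW hj
  by_contra hne
  rcases lt_or_gt_of_ne hne with h | h
  · linarith [hgap i j h, hi'.2, hj'.1]
  · linarith [hgap j i h, hj'.2, hi'.1]

/-- for an abrupt-drift process with concepts embedded as `μ₀,…,μₙ ∈ H`,
and a zero-mean integrable weighting `w` whose antiderivative `W` is supported in an
interval of length smaller than the minimal gap between the change points,
`‖∫ μ_{p_s} w(t-s) ds‖ = Σⱼ ‖μⱼ - μⱼ₋₁‖ |W(t - tⱼ)|` for all `t`. -/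
theorem abrupt_drift_magnitude_norm
    {H : Type*} [NormedAddCommGroup H] [InnerProductSpace ℝ H] [CompleteSpace H]
    (n : ℕ) (t : Fin n → ℝ) (ht : StrictMono t)
    (μ : Fin (n + 1) → H)
    (m : ℝ → H) (hm : ∀ s, m s = μ (conceptIndex n t s))
    (w : ℝ → ℝ) (hw : Integrable w) (hw0 : ∫ x, w x = 0)
    (W : ℝ → ℝ) (hW : ∀ x, W x = ∫ s in Set.Iic x, w s)
    (a l : ℝ) (hWsupp : Function.support W ⊆ Set.Icc a (a + l))
    (hgap : ∀ i j : Fin n, i < j → l < t j - t i) :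
    ∀ τ : ℝ,
      ‖∫ s : ℝ, w (τ - s) • m s‖
        = ∑ j : Fin n, ‖μ j.succ - μ j.castSucc‖ * |W (τ - t j)| := by
  intro τ
  have hconv : ∫ s, w (τ - s) • m s = ∑ j, W (τ - t j) • (μ j.succ - μ j.castSucc) := by
    simp_rw [hm, apply_conceptIndex_eq_add_sum ht.monotone, integral_comp_sub_smul_step hw, hw0,
      zero_smul, zero_add, hW]
  have hsupp : (Function.support fun j => W (τ - t j) • (μ j.succ - μ j.castSucc)).Subsingleton :=
    (subsingleton_support_comp_sub_of_lt_sub hWsupp hgap τ).anti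
      (Function.support_smul_subset_left _ _)
  rw [hconv, norm_sum_eq_sum_norm_of_subsingleton_support hsupp]
  simp_rw [norm_smul, Real.norm_eq_abs, mul_comm]
end

section
/- Let p_t be an abrupt-drift process with single change point t₁ and concepts P₀ ≠ P₁, and let w₀ = 1_{[−l,0]} − 1_{[−2l,−l]}. Then, with μᵢ the kernel embeddings, ‖∫ p_s w₀(s − t) ds‖_H = ‖μ₁ − μ₀‖_H · h_l(t − t₁), where h_l(x) = |W(−x)| is the triangular function equal to min(x, 2l − x) for x ∈ [0,2l] and 0 otherwise; in particular the maximum over t equals l · MMD(P₀,P₁) and is attained at t = t₁ + l. -/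
/-!
Write the step as `m = μ₀ + 1_{[t₁,∞)} • (μ₁ - μ₀)`. The window `w₀` has total mass zero, so
the constant part `μ₀` is annihilated and the convolution is `W(t₁ - τ) • (μ₁ - μ₀)`, where
`W(a) = ∫_a^∞ w₀` is the tail of the window. For `w₀ = 1_{[-l,0]} - 1_{[-2l,-l)}` the tail
`W(-x)` is the difference of the two clamped ramps `clamp(x, 0, l)` and `clamp(x - l, 0, l)`,
i.e. the tent `h_l(x)`, which is nonnegative, at most `l`, and equal to `l` at `x = l`.
-/

open MeasureTheory Set

theorem setIntegral_Ici_comp_sub_right {E : Type*} [NormedAddCommGroup E] [NormedSpace ℝ E]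
    (f : ℝ → E) (t τ : ℝ) :
    ∫ s in Ici t, f (s - τ) = ∫ x in Ici (t - τ), f x := by
  rw [← integral_indicator measurableSet_Ici, ← integral_indicator measurableSet_Ici]
  conv_rhs => rw [← integral_sub_right_eq_self _ τ]
  congr 1 with s
  simp only [indicator_apply, mem_Ici, sub_le_sub_iff_right]

theorem setIntegral_indicator_one {X : Type*} [MeasurableSpace X] {μ : Measure X} {s : Set X}
    (hs : MeasurableSet s) (t : Set X) :
    ∫ x in t, s.indicator 1 x ∂μ = μ.real (s ∩ t) := by
  rw [integral_indicator_one hs, measureReal_restrict_apply hs]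

theorem integrable_indicator_one {X : Type*} [MeasurableSpace X] {μ : Measure X} {s : Set X}
    (hs : MeasurableSet s) (hμs : μ s ≠ ⊤) : Integrable (s.indicator (1 : X → ℝ)) μ :=
  (integrable_indicator_iff hs).2 (integrableOn_const hμs)

noncomputable def twoWindow (l x : ℝ) : ℝ :=
  (Icc (-l) 0).indicator 1 x - (Ico (-(2 * l)) (-l)).indicator 1 x

noncomputable def tent (l x : ℝ) : ℝ :=
  if x ∈ Icc 0 (2 * l) then min x (2 * l - x) else 0

theorem twoWindow_eq_ite (l x : ℝ) :
    twoWindow l x = if x ∈ Icc (-l) 0 then 1 else if x ∈ Ico (-(2 * l)) (-l) then -1 else 0 := by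
  rw [twoWindow]
  by_cases h₁ : x ∈ Icc (-l) 0
  · have h₂ : x ∉ Ico (-(2 * l)) (-l) := fun h₂ => by linarith [h₁.1, h₂.2]
    rw [if_pos h₁, indicator_of_mem h₁, indicator_of_notMem h₂, Pi.one_apply, sub_zero]
  · by_cases h₂ : x ∈ Ico (-(2 * l)) (-l)
    · rw [if_neg h₁, if_pos h₂, indicator_of_notMem h₁, indicator_of_mem h₂, Pi.one_apply,
        zero_sub]
    · rw [if_neg h₁, if_neg h₂, indicator_of_notMem h₁, indicator_of_notMem h₂, sub_zero]

theorem integrable_twoWindow (l : ℝ) : Integrable (twoWindow l) :=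
  (integrable_indicator_one measurableSet_Icc measure_Icc_lt_top.ne).sub
    (integrable_indicator_one measurableSet_Ico measure_Ico_lt_top.ne)

theorem integral_twoWindow (l : ℝ) : ∫ x, twoWindow l x = 0 := by
  unfold twoWindow
  rw [integral_sub (integrable_indicator_one measurableSet_Icc measure_Icc_lt_top.ne)
      (integrable_indicator_one measurableSet_Ico measure_Ico_lt_top.ne),
    integral_indicator_one measurableSet_Icc, integral_indicator_one measurableSet_Ico,
    Real.volume_real_Icc, Real.volume_real_Ico]
  ring_nf

theorem setIntegral_Ici_neg_twoWindow (l x : ℝ) :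
    ∫ y in Ici (-x), twoWindow l y = max (min x l) 0 - max (min (x - l) l) 0 := by
  have hpos : Icc (-l) 0 ∩ Ici (-x) = Icc (max (-l) (-x)) 0 := by
    ext y; simp only [mem_inter_iff, mem_Icc, mem_Ici, max_le_iff]; tauto
  have hneg : Ico (-(2 * l)) (-l) ∩ Ici (-x) = Ico (max (-(2 * l)) (-x)) (-l) := by
    ext y; simp only [mem_inter_iff, mem_Ico, mem_Ici, max_le_iff]; tauto
  unfold twoWindow
  rw [integral_sub (integrable_indicator_one measurableSet_Icc measure_Icc_lt_top.ne).integrableOn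
      (integrable_indicator_one measurableSet_Ico measure_Ico_lt_top.ne).integrableOn,
    setIntegral_indicator_one measurableSet_Icc, setIntegral_indicator_one measurableSet_Ico,
    hpos, hneg, Real.volume_real_Icc, Real.volume_real_Ico, max_neg_neg, max_neg_neg,
    sub_neg_eq_add, zero_add, sub_neg_eq_add, neg_add_eq_sub, ← min_sub_sub_right, two_mul,
    add_sub_cancel_right, min_comm l, min_comm l]

theorem max_min_sub_max_min_eq_tent (l x : ℝ) :
    max (min x l) 0 - max (min (x - l) l) 0 = tent l x := by
  unfold tent
  split_ifs with hx
  · rcases le_total x l with h | h <;>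
      simp only [min_def, max_def] <;> split_ifs <;> linarith [hx.1, hx.2]
  · rw [mem_Icc, not_and_or, not_le, not_le] at hx
    simp only [min_def, max_def]; split_ifs <;> rcases hx with hx | hx <;> linarith

theorem tent_nonneg (l x : ℝ) : 0 ≤ tent l x := by
  unfold tent
  split_ifs with hx
  · exact le_min hx.1 (sub_nonneg.2 hx.2)
  · rfl

theorem tent_le {l : ℝ} (hl : 0 ≤ l) (x : ℝ) : tent l x ≤ l := by
  unfold tent
  split_ifs
  · rcases le_total x l with h | h
    · exact (min_le_left _ _).trans h
    · exact (min_le_right _ _).trans (by linarith)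
  · exact hl

theorem tent_self {l : ℝ} (hl : 0 ≤ l) : tent l l = l := by
  rw [tent, if_pos ⟨hl, by linarith⟩, two_mul, add_sub_cancel_right, min_self]

section StepFunction

variable {H : Type*} [NormedAddCommGroup H] [NormedSpace ℝ H] [CompleteSpace H]

theorem integral_smul_step_of_integral_eq_zero {f : ℝ → ℝ} (hf : Integrable f)
    (hf₀ : ∫ s, f s = 0) (μ₀ μ₁ : H) (t₁ : ℝ) :
    ∫ s, f s • (if s < t₁ then μ₀ else μ₁) = (∫ s in Ici t₁, f s) • (μ₁ - μ₀) := by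
  have hsplit : (fun s => f s • (if s < t₁ then μ₀ else μ₁))
      = fun s => f s • μ₀ + (Ici t₁).indicator f s • (μ₁ - μ₀) := by
    ext s
    by_cases hs : s < t₁
    · simp [hs]
    · simp [hs, not_lt.mp hs, smul_sub]
  rw [hsplit, integral_add (hf.smul_const _) ((hf.indicator measurableSet_Ici).smul_const _),
    integral_smul_const, integral_smul_const, hf₀, zero_smul, zero_add,
    integral_indicator measurableSet_Ici]

theorem integral_twoWindow_sub_smul_step (l τ t₁ : ℝ) (μ₀ μ₁ : H) :
    ∫ s, twoWindow l (s - τ) • (if s < t₁ then μ₀ else μ₁) = tent l (τ - t₁) • (μ₁ - μ₀) := by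
  rw [integral_smul_step_of_integral_eq_zero ((integrable_twoWindow l).comp_sub_right τ)
      ((integral_sub_right_eq_self _ τ).trans (integral_twoWindow l)),
    setIntegral_Ici_comp_sub_right, ← neg_sub τ t₁, setIntegral_Ici_neg_twoWindow,
    max_min_sub_max_min_eq_tent]

end StepFunction

theorem single_change_point_shape_function_general
    {H : Type*} [NormedAddCommGroup H] [InnerProductSpace ℝ H] [CompleteSpace H]
    (μ₀ μ₁ : H)
    (t₁ : ℝ)
    (m : ℝ → H) (hm : ∀ s, m s = if s < t₁ then μ₀ else μ₁)
    (l : ℝ) (hl : 0 < l)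
    (w₀ : ℝ → ℝ)
    (hw : ∀ x, w₀ x = if x ∈ Set.Icc (-l) 0 then (1 : ℝ)
        else if x ∈ Set.Ico (-(2 * l)) (-l) then -1 else 0)
    (hfun : ℝ → ℝ)
    (hhl : ∀ x, hfun x = if x ∈ Set.Icc (0 : ℝ) (2 * l) then min x (2 * l - x) else 0) :
    (∀ τ : ℝ, ‖∫ s : ℝ, w₀ (s - τ) • m s‖ = ‖μ₁ - μ₀‖ * hfun (τ - t₁))
      ∧ ‖∫ s : ℝ, w₀ (s - (t₁ + l)) • m s‖ = l * ‖μ₁ - μ₀‖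
      ∧ ∀ τ : ℝ, ‖∫ s : ℝ, w₀ (s - τ) • m s‖ ≤ l * ‖μ₁ - μ₀‖ := by
  obtain rfl : w₀ = twoWindow l := funext fun x => (hw x).trans (twoWindow_eq_ite l x).symm
  obtain rfl : m = fun s => if s < t₁ then μ₀ else μ₁ := funext hm
  obtain rfl : hfun = tent l := funext hhl
  have hnorm : ∀ τ, ‖∫ s, twoWindow l (s - τ) • (if s < t₁ then μ₀ else μ₁)‖
      = ‖μ₁ - μ₀‖ * tent l (τ - t₁) := fun τ => by
    rw [integral_twoWindow_sub_smul_step, norm_smul, Real.norm_of_nonneg (tent_nonneg _ _),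
      mul_comm]
  refine ⟨hnorm, ?_, fun τ => ?_⟩
  · rw [hnorm, add_sub_cancel_left, tent_self hl.le, mul_comm]
  · rw [hnorm, mul_comm l]
    exact mul_le_mul_of_nonneg_left (tent_le hl.le _) (norm_nonneg _)

/-- for a single abrupt change point `t₁` with embedded concepts
`μ₀ ≠ μ₁` and the two-window weighting `w₀ = 1_{[-l,0]} - 1_{[-2l,-l)}`,
`‖∫ p_s w₀(s - t) ds‖ = ‖μ₁ - μ₀‖ h_l(t - t₁)` with the triangular shape
`h_l(x) = min(x, 2l - x)` on `[0,2l]` and `0` elsewhere; the maximum over `t` is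
`l · MMD(P₀,P₁) = l ‖μ₁ - μ₀‖`, attained at `t = t₁ + l`. -/
theorem single_change_point_shape_function
    {H : Type*} [NormedAddCommGroup H] [InnerProductSpace ℝ H] [CompleteSpace H]
    (μ₀ μ₁ : H) (hne : μ₀ ≠ μ₁)
    (t₁ : ℝ)
    (m : ℝ → H) (hm : ∀ s, m s = if s < t₁ then μ₀ else μ₁)
    (l : ℝ) (hl : 0 < l)
    (w₀ : ℝ → ℝ)
    (hw : ∀ x, w₀ x = if x ∈ Set.Icc (-l) 0 then (1 : ℝ)
        else if x ∈ Set.Ico (-(2 * l)) (-l) then -1 else 0)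
    (hfun : ℝ → ℝ)
    (hhl : ∀ x, hfun x = if x ∈ Set.Icc (0 : ℝ) (2 * l) then min x (2 * l - x) else 0) :
    (∀ τ : ℝ, ‖∫ s : ℝ, w₀ (s - τ) • m s‖ = ‖μ₁ - μ₀‖ * hfun (τ - t₁))
      ∧ ‖∫ s : ℝ, w₀ (s - (t₁ + l)) • m s‖ = l * ‖μ₁ - μ₀‖
      ∧ ∀ τ : ℝ, ‖∫ s : ℝ, w₀ (s - τ) • m s‖ ≤ l * ‖μ₁ - μ₀‖ :=
  single_change_point_shape_function_general μ₀ μ₁ t₁ m hm l hl w₀ hw hfun hhl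
end
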